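/- Suppose x, y in (0,1), and normalized confusion matrices for two groups satisfy the row constraints, overall accuracy equality in the form FPa+FNa = FPb+FNb, and treatment equality (FNa·FPb = FNb·FPa), with FPb+FNb > 0. Then FPa = FPb and FNa = FNb. -/
import Mathlib


theorem stmt
    (x y TPa FNa TNa FPa TPb FNb TNb FPb : ℝ)
    (hx0 : 0 < x) (hx1 : x < 1) (hy0 : 0 < y) (hy1 : y < 1)
    (hTPa : 0 ≤ TPa) (hFNa : 0 ≤ FNa) (hTNa : 0 ≤ TNa) (hFPa : 0 ≤ FPa)
    (hTPb : 0 ≤ TPb) (hFNb : 0 ≤ FNb) (hTNb : 0 ≤ TNb) (hFPb : 0 ≤ FPb)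
    (hra : TPa + FNa = 1 - x) (hra' : TNa + FPa = x)
    (hrb : TPb + FNb = 1 - y) (hrb' : TNb + FPb = y)
    (hoae : FPa + FNa = FPb + FNb)
    (hte : FNa * FPb = FNb * FPa)
    (hnd : 0 < FPb + FNb)
    : FPa = FPb ∧ FNa = FNb := by
  have h : FNa = FNb := by
    have key : (FPb + FNb) * FNa = (FPb + FNb) * FNb := by nlinarith
    exact mul_left_cancel₀ hnd.ne' key
  exact ⟨by linarith, h⟩
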